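/- Let $S, f_1, f_2 : [0,R] \to \mathbb{R}$ be continuously differentiable with $f_1(R) = f_2(R) = 0$, and define operators $\hat D_1\phi = S\phi + (f_1\phi)' - f_2\phi'$ and $\hat D_2\phi = S\phi + (f_2\phi)' - f_1\phi'$. Then for all continuously differentiable $\psi, \phi : [0,R] \to \mathbb{R}$ vanishing at the origin, $\int_0^R (\hat D_1\psi)\,\phi\,dr = \int_0^R \psi\,(\hat D_2\phi)\,dr$. -/

import Mathlib

/-! The two integrands differ by an exact derivative: the `S`-terms cancel, and the product rule
gives `(D̂₁ψ) φ - ψ (D̂₂φ) = ((f₁ - f₂) ψ φ)'`. Integrating over `[0, R]`, the boundary term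
vanishes at `R` since `f₁` and `f₂` do, and at `0` since `ψ` does. -/

/-- `D̂₁ = crossCoupling S f₁ f₂` and `D̂₂ = crossCoupling S f₂ f₁`. -/
noncomputable def crossCoupling (S f g ψ : ℝ → ℝ) (r : ℝ) : ℝ :=
  S r * ψ r + deriv (fun x => f x * ψ x) r - g r * deriv ψ r

theorem continuous_crossCoupling {S f g ψ : ℝ → ℝ} (hS : Continuous S) (hf : ContDiff ℝ 1 f)
    (hg : Continuous g) (hψ : ContDiff ℝ 1 ψ) : Continuous (crossCoupling S f g ψ) :=
  ((hS.mul hψ.continuous).add ((hf.mul hψ).continuous_deriv le_rfl)).sub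
    (hg.mul (hψ.continuous_deriv le_rfl))

theorem hasDerivAt_crossCoupling_mul_sub {S f g ψ φ : ℝ → ℝ} {r : ℝ}
    (hf : DifferentiableAt ℝ f r) (hg : DifferentiableAt ℝ g r)
    (hψ : DifferentiableAt ℝ ψ r) (hφ : DifferentiableAt ℝ φ r) :
    HasDerivAt (fun x => (f x - g x) * (ψ x * φ x))
      (crossCoupling S f g ψ r * φ r - ψ r * crossCoupling S g f φ r) r := by
  have hderiv :=
    (hf.hasDerivAt.fun_sub hg.hasDerivAt).fun_mul (hψ.hasDerivAt.fun_mul hφ.hasDerivAt)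
  refine hderiv.congr_deriv ?_
  rw [crossCoupling, crossCoupling, deriv_fun_mul hf hψ, deriv_fun_mul hg hφ]
  ring

theorem integral_crossCoupling_mul_sub {S f g ψ φ : ℝ → ℝ} (hS : Continuous S)
    (hf : ContDiff ℝ 1 f) (hg : ContDiff ℝ 1 g) (hψ : ContDiff ℝ 1 ψ) (hφ : ContDiff ℝ 1 φ)
    (a b : ℝ) :
    (∫ r in a..b, crossCoupling S f g ψ r * φ r) - ∫ r in a..b, ψ r * crossCoupling S g f φ r =
      (f b - g b) * (ψ b * φ b) - (f a - g a) * (ψ a * φ a) := by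
  have hL : Continuous fun r => crossCoupling S f g ψ r * φ r :=
    (continuous_crossCoupling hS hf hg.continuous hψ).mul hφ.continuous
  have hR : Continuous fun r => ψ r * crossCoupling S g f φ r :=
    hψ.continuous.mul (continuous_crossCoupling hS hg hf.continuous hφ)
  rw [← intervalIntegral.integral_sub (hL.intervalIntegrable a b) (hR.intervalIntegrable a b)]
  refine intervalIntegral.integral_eq_sub_of_hasDerivAt
    (f := fun x => (f x - g x) * (ψ x * φ x)) (fun r _ => ?_)
    ((hL.fun_sub hR).intervalIntegrable a b)
  exact hasDerivAt_crossCoupling_mul_sub (hf.differentiable one_ne_zero r)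
    (hg.differentiable one_ne_zero r) (hψ.differentiable one_ne_zero r)
    (hφ.differentiable one_ne_zero r)

theorem cross_coupling_operators_symmetric_general
    (R : ℝ) (S f₁ f₂ ψ φ : ℝ → ℝ)
    (hS : ContDiff ℝ 1 S) (hf₁ : ContDiff ℝ 1 f₁) (hf₂ : ContDiff ℝ 1 f₂)
    (hψ : ContDiff ℝ 1 ψ) (hφ : ContDiff ℝ 1 φ)
    (hf₁R : f₁ R = 0) (hf₂R : f₂ R = 0) (hψ0 : ψ 0 = 0) :
    (∫ r in (0:ℝ)..R,
        (S r * ψ r + deriv (fun x => f₁ x * ψ x) r - f₂ r * deriv ψ r) * φ r)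
      = ∫ r in (0:ℝ)..R,
        ψ r * (S r * φ r + deriv (fun x => f₂ x * φ x) r - f₁ r * deriv φ r) := by
  have hboundary := integral_crossCoupling_mul_sub hS.continuous hf₁ hf₂ hψ hφ 0 R
  rw [hf₁R, hf₂R, hψ0] at hboundary
  exact sub_eq_zero.mp (by simpa [crossCoupling] using hboundary)

/-- Symmetry relation between the two cross-coupling operators
`D̂₁φ = Sφ + (f₁φ)' - f₂φ'` and `D̂₂φ = Sφ + (f₂φ)' - f₁φ'`:
`∫₀ᴿ (D̂₁ψ) φ = ∫₀ᴿ ψ (D̂₂φ)` for admissible `ψ, φ`. -/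
theorem cross_coupling_operators_symmetric
    (R : ℝ) (hR : 0 ≤ R) (S f₁ f₂ ψ φ : ℝ → ℝ)
    (hS : ContDiff ℝ 1 S) (hf₁ : ContDiff ℝ 1 f₁) (hf₂ : ContDiff ℝ 1 f₂)
    (hψ : ContDiff ℝ 1 ψ) (hφ : ContDiff ℝ 1 φ)
    (hf₁R : f₁ R = 0) (hf₂R : f₂ R = 0) (hψ0 : ψ 0 = 0) (hφ0 : φ 0 = 0) :
    (∫ r in (0:ℝ)..R,
        (S r * ψ r + deriv (fun x => f₁ x * ψ x) r - f₂ r * deriv ψ r) * φ r)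
      = ∫ r in (0:ℝ)..R,
        ψ r * (S r * φ r + deriv (fun x => f₂ x * φ x) r - f₁ r * deriv φ r) :=
  cross_coupling_operators_symmetric_general R S f₁ f₂ ψ φ hS hf₁ hf₂ hψ hφ hf₁R hf₂R hψ0
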